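/- arXiv:2001.09950 — 3 statements merged into one kernel-verified Lean document; each statement's English description precedes it below -/
import Mathlib

section
/- Let V be a finite nonempty subset of X × Y and let q = (q_x, q_y) ∈ X × Y be a query point. Let ṽ ∈ V be a point whose first component is nearest to q_x in X, i.e. d_X(q_x, ṽ₁) = min_{v ∈ V} d_X(q_x, v₁); write D_r = d_X(q_x, ṽ₁) and D_f = √(D_r² + λ·D_b²). Then every v ∈ V with d_f(q, v) ≤ d_f(q, ṽ) satisfies d_X(q_x, v₁) ≤ D_f. In other words, any element of V at least as close to q as ṽ in the full-space metric is contained in the robot-space ball of radius D_f about q_x. -/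
/-!
The robot-space distance never exceeds the full-space distance, and the band term adds at most
`λ D_b²` under the square root, so `d_X(q_x, v₁) ≤ d_f(q, v) ≤ d_f(q, ṽ) ≤ √(D_r² + λ D_b²)`.
-/

section WeightedProdDist

variable {X Y : Type*} [MetricSpace X] [MetricSpace Y]

/-- The distance `d_f` on `X × Y`, with weight `l` on the second factor. -/
noncomputable def weightedProdDist (l : ℝ) (p q : X × Y) : ℝ :=
  √(dist p.1 q.1 ^ 2 + l * dist p.2 q.2 ^ 2)

theorem dist_fst_le_weightedProdDist {l : ℝ} (hl : 0 ≤ l) (p q : X × Y) :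
    dist p.1 q.1 ≤ weightedProdDist l p q :=
  Real.le_sqrt_of_sq_le (le_add_of_nonneg_right (by positivity))

theorem weightedProdDist_le_of_dist_snd_le {l D : ℝ} (hl : 0 ≤ l) {p q : X × Y}
    (h : dist p.2 q.2 ≤ D) :
    weightedProdDist l p q ≤ √(dist p.1 q.1 ^ 2 + l * D ^ 2) := by
  unfold weightedProdDist
  gcongr

end WeightedProdDist

theorem candidates_in_radius_general {X Y : Type*} [MetricSpace X] [MetricSpace Y]
    (l : ℝ) (hl : 0 < l) (Db : ℝ)
    (hbound : ∀ y y' : Y, dist y y' ≤ Db)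
    (df : X × Y → X × Y → ℝ)
    (hdf : ∀ p q, df p q = Real.sqrt (dist p.1 q.1 ^ 2 + l * dist p.2 q.2 ^ 2))
    (V : Finset (X × Y))
    (q : X × Y) (vt : X × Y)
    (Dr Df : ℝ) (hDr : Dr = dist q.1 vt.1)
    (hDf : Df = Real.sqrt (Dr ^ 2 + l * Db ^ 2)) :
    ∀ v ∈ V, df q v ≤ df q vt → dist q.1 v.1 ≤ Df := by
  have hdf : df = weightedProdDist l := funext₂ hdf
  subst hdf hDr hDf
  intro v _ hle
  calc dist q.1 v.1 ≤ weightedProdDist l q v := dist_fst_le_weightedProdDist hl.le q v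
    _ ≤ weightedProdDist l q vt := hle
    _ ≤ _ := weightedProdDist_le_of_dist_snd_le hl.le (hbound q.2 vt.2)

/-- Any element of `V` at least as close to `q` as the robot-space nearest neighbor `vt`
(under the full-space metric) lies in the robot-space ball of radius `D_f` about `q.1`. -/
theorem candidates_in_radius {X Y : Type*} [MetricSpace X] [MetricSpace Y]
    (l : ℝ) (hl : 0 < l) (Db : ℝ) (hDb : 0 ≤ Db)
    (hbound : ∀ y y' : Y, dist y y' ≤ Db)
    (df : X × Y → X × Y → ℝ)
    (hdf : ∀ p q, df p q = Real.sqrt (dist p.1 q.1 ^ 2 + l * dist p.2 q.2 ^ 2))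
    (V : Finset (X × Y)) (hV : V.Nonempty)
    (q : X × Y) (vt : X × Y) (hvt : vt ∈ V)
    (hmin : ∀ v ∈ V, dist q.1 vt.1 ≤ dist q.1 v.1)
    (Dr Df : ℝ) (hDr : Dr = dist q.1 vt.1)
    (hDf : Df = Real.sqrt (Dr ^ 2 + l * Db ^ 2)) :
    ∀ v ∈ V, df q v ≤ df q vt → dist q.1 v.1 ≤ Df :=
  candidates_in_radius_general l hl Db hbound df hdf V q vt Dr Df hDr hDf
end

section
/- Let V be a finite nonempty subset of X × Y and let q = (q_x, q_y) ∈ X × Y be a query point. Let ṽ ∈ V satisfy d_X(q_x, ṽ₁) = min_{v ∈ V} d_X(q_x, v₁), and set D_f = √(d_X(q_x, ṽ₁)² + λ·D_b²). Let Q = {v ∈ V : d_X(q_x, v₁) ≤ D_f} be the result of a robot-space radius query of radius D_f. Then Q is nonempty and min_{v ∈ Q} d_f(q, v) = min_{v ∈ V} d_f(q, v); consequently, any minimizer of d_f(q, ·) over Q is a nearest neighbor of q in V under the full-space metric d_f. That is, the two-stage nearest-neighbor search (first in robot space, then a radius query refined in full space) is equivalent to a nearest-neighbor search in the full configuration space.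 -/
/-!
Every point `v` has `d_X(q_x, v₁) ≤ d_f(q, v)`, and since the band component contributes at most
`λ·D_b²`, the point `ṽ` has `d_f(q, ṽ) ≤ D_f`. Hence a point of `V` outside the radius-`D_f` query
is at full distance `> D_f ≥ d_f(q, ṽ)` from `q`, so it is beaten by `ṽ ∈ Q`.
-/

theorem Real.le_sqrt_sq_add_mul_sq {a b l : ℝ} (hl : 0 ≤ l) :
    a ≤ √(a ^ 2 + l * b ^ 2) :=
  Real.le_sqrt_of_sq_le (le_add_of_nonneg_right (by positivity))

theorem Real.sqrt_sq_add_mul_sq_le {a b B l : ℝ} (hb : 0 ≤ b) (hbB : b ≤ B) (hl : 0 ≤ l) :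
    √(a ^ 2 + l * b ^ 2) ≤ √(a ^ 2 + l * B ^ 2) :=
  Real.sqrt_le_sqrt (by gcongr)

namespace Finset

variable {α β : Type*}

theorem inf'_eq_inf'_of_subset_of_forall_exists_le [SemilatticeInf β] {s t : Finset α}
    (f : α → β) (hst : s ⊆ t) (hs : s.Nonempty) (ht : t.Nonempty)
    (h : ∀ b ∈ t, ∃ a ∈ s, f a ≤ f b) : s.inf' hs f = t.inf' ht f :=
  le_antisymm
    (le_inf' ht f fun b hb => by
      obtain ⟨a, ha, hab⟩ := h b hb
      exact (inf'_le f ha).trans hab)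
    (inf'_mono f hst hs)

theorem exists_mem_filter_le_of_le [LinearOrder β] {t : Finset α} {f g : α → β} {r : β}
    (hgf : ∀ a, g a ≤ f a) {a₀ : α} (ha₀ : a₀ ∈ t) (hr : f a₀ ≤ r) :
    ∀ b ∈ t, ∃ a ∈ t.filter (fun a => g a ≤ r), f a ≤ f b := by
  intro b hb
  by_cases hgb : g b ≤ r
  · exact ⟨b, mem_filter.2 ⟨hb, hgb⟩, le_rfl⟩
  · exact ⟨a₀, mem_filter.2 ⟨ha₀, (hgf a₀).trans hr⟩,
      hr.trans ((not_le.1 hgb).le.trans (hgf b))⟩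

end Finset

theorem two_stage_nn_equivalent_general {X Y : Type*} [MetricSpace X] [MetricSpace Y]
    (l : ℝ) (hl : 0 < l) (Db : ℝ)
    (hbound : ∀ y y' : Y, dist y y' ≤ Db)
    (df : X × Y → X × Y → ℝ)
    (hdf : ∀ p q, df p q = Real.sqrt (dist p.1 q.1 ^ 2 + l * dist p.2 q.2 ^ 2))
    (V : Finset (X × Y)) (hV : V.Nonempty)
    (q : X × Y) (vt : X × Y) (hvt : vt ∈ V)
    (Df : ℝ) (hDf : Df = Real.sqrt (dist q.1 vt.1 ^ 2 + l * Db ^ 2))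
    (Q : Finset (X × Y))
    (hQ : ∀ v, v ∈ Q ↔ v ∈ V ∧ dist q.1 v.1 ≤ Df) :
    ∃ hQne : Q.Nonempty,
      Q.inf' hQne (df q) = V.inf' hV (df q) ∧
      ∀ v ∈ Q, (∀ w ∈ Q, df q v ≤ df q w) → ∀ w ∈ V, df q v ≤ df q w := by
  have hfst : ∀ v, dist q.1 v.1 ≤ df q v := fun v => by
    rw [hdf]; exact Real.le_sqrt_sq_add_mul_sq hl.le
  have hvt_le : df q vt ≤ Df := by
    rw [hdf, hDf]; exact Real.sqrt_sq_add_mul_sq_le dist_nonneg (hbound _ _) hl.le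
  have hQ_eq : Q = V.filter (fun v => dist q.1 v.1 ≤ Df) := by
    ext v; rw [hQ, Finset.mem_filter]
  have hcover : ∀ w ∈ V, ∃ u ∈ Q, df q u ≤ df q w :=
    hQ_eq ▸ Finset.exists_mem_filter_le_of_le hfst hvt hvt_le
  have hQne : Q.Nonempty := ⟨vt, (hQ vt).2 ⟨hvt, (hfst vt).trans hvt_le⟩⟩
  refine ⟨hQne, Finset.inf'_eq_inf'_of_subset_of_forall_exists_le _
    (fun v hv => ((hQ v).1 hv).1) hQne hV hcover, fun v _ hv w hw => ?_⟩
  obtain ⟨u, hu, hle⟩ := hcover w hw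
  exact (hv u hu).trans hle

/-- The two-stage nearest-neighbor search (robot-space nearest neighbor, then a radius
query refined in full space) is equivalent to a nearest-neighbor search in the full
configuration space. (Paper's Lemma 2.) -/
theorem two_stage_nn_equivalent {X Y : Type*} [MetricSpace X] [MetricSpace Y]
    (l : ℝ) (hl : 0 < l) (Db : ℝ) (hDb : 0 ≤ Db)
    (hbound : ∀ y y' : Y, dist y y' ≤ Db)
    (df : X × Y → X × Y → ℝ)
    (hdf : ∀ p q, df p q = Real.sqrt (dist p.1 q.1 ^ 2 + l * dist p.2 q.2 ^ 2))
    (V : Finset (X × Y)) (hV : V.Nonempty)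
    (q : X × Y) (vt : X × Y) (hvt : vt ∈ V)
    (hmin : ∀ v ∈ V, dist q.1 vt.1 ≤ dist q.1 v.1)
    (Df : ℝ) (hDf : Df = Real.sqrt (dist q.1 vt.1 ^ 2 + l * Db ^ 2))
    (Q : Finset (X × Y))
    (hQ : ∀ v, v ∈ Q ↔ v ∈ V ∧ dist q.1 v.1 ≤ Df) :
    ∃ hQne : Q.Nonempty,
      Q.inf' hQne (df q) = V.inf' hV (df q) ∧
      ∀ v ∈ Q, (∀ w ∈ Q, df q v ≤ df q w) → ∀ w ∈ V, df q v ≤ df q w :=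
  two_stage_nn_equivalent_general l hl Db hbound df hdf V hV q vt hvt Df hDf Q hQ
end

section
/- Let K ≥ 1, let γ_1, …, γ_K ∈ (0,1], and let a : {0,…,K} × ℕ → ℝ satisfy: (i) 0 ≤ a(k,n) ≤ 1 for all k, n; (ii) a(0,n) = 1 for all n; and (iii) for every k ∈ {1,…,K} and every n ≥ 1, 1 − a(k,n) ≤ ∏_{i=1}^{n} (1 − γ_k · a(k−1, i−1)). Then for every k ∈ {1,…,K}, lim_{n→∞} a(k,n) = 1; in particular lim_{n→∞} a(K,n) = 1. -/
/-!
Induction on `k`. Once `a(k-1, ·) → 1`, the factors `γ_k · a(k-1, i)` are eventually close to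
`γ_k > 0`, so their series diverges; since `1 - x ≤ exp (-x)`, the product
`∏ (1 - γ_k · a(k-1, i))` is at most `exp (-∑ γ_k · a(k-1, i)) → 0`, and the bound (iii)
squeezes `a(k, n)` to `1`.
-/

open Finset Filter Topology

theorem Finset.prod_Icc_one_comp_pred {M : Type*} [CommMonoid M] (g : ℕ → M) (n : ℕ) :
    ∏ i ∈ Icc 1 n, g (i - 1) = ∏ i ∈ range n, g i := by
  rw [← Ico_add_one_right_eq_Icc, prod_Ico_eq_prod_range]
  simp

theorem Real.prod_one_sub_le_exp_neg_sum {ι : Type*} {s : Finset ι} {x : ι → ℝ}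
    (hx : ∀ i ∈ s, x i ≤ 1) : ∏ i ∈ s, (1 - x i) ≤ Real.exp (-∑ i ∈ s, x i) := by
  rw [← sum_neg_distrib, Real.exp_sum]
  exact prod_le_prod (fun i hi => sub_nonneg.2 (hx i hi)) fun i _ => Real.one_sub_le_exp_neg _

theorem tendsto_prod_one_sub_atTop_zero_of_not_summable {x : ℕ → ℝ} (h0 : ∀ i, 0 ≤ x i)
    (h1 : ∀ i, x i ≤ 1) (hx : ¬Summable x) :
    Tendsto (fun n => ∏ i ∈ range n, (1 - x i)) atTop (𝓝 0) := by
  have hsum : Tendsto (fun n => ∑ i ∈ range n, x i) atTop atTop :=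
    (not_summable_iff_tendsto_nat_atTop_of_nonneg h0).1 hx
  refine tendsto_of_tendsto_of_tendsto_of_le_of_le tendsto_const_nhds
    (Real.tendsto_exp_neg_atTop_nhds_zero.comp hsum) (fun n => ?_) (fun n => ?_)
  · exact prod_nonneg fun i _ => sub_nonneg.2 (h1 i)
  · exact Real.prod_one_sub_le_exp_neg_sum fun i _ => h1 i

theorem tendsto_one_of_one_sub_le_prod {γ : ℝ} (hγ0 : 0 < γ) (hγ1 : γ ≤ 1) {b c : ℕ → ℝ}
    (hb0 : ∀ n, 0 ≤ b n) (hb1 : ∀ n, b n ≤ 1) (hb : Tendsto b atTop (𝓝 1)) (hc : ∀ n, c n ≤ 1)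
    (hbound : ∀ n, 1 ≤ n → 1 - c n ≤ ∏ i ∈ Icc 1 n, (1 - γ * b (i - 1))) :
    Tendsto c atTop (𝓝 1) := by
  have hdiv : ¬Summable fun i => γ * b i := fun hs => by
    have := tendsto_nhds_unique (hb.const_mul γ) hs.tendsto_atTop_zero
    simp [hγ0.ne'] at this
  have hprod : Tendsto (fun n => ∏ i ∈ range n, (1 - γ * b i)) atTop (𝓝 0) :=
    tendsto_prod_one_sub_atTop_zero_of_not_summable (fun i => mul_nonneg hγ0.le (hb0 i))
      (fun i => mul_le_one₀ hγ1 (hb0 i) (hb1 i)) hdiv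
  have hlower : Tendsto (fun n => 1 - ∏ i ∈ range n, (1 - γ * b i)) atTop (𝓝 1) := by
    simpa using tendsto_const_nhds.sub hprod
  refine tendsto_of_tendsto_of_tendsto_of_le_of_le' hlower tendsto_const_nhds ?_
    (Eventually.of_forall hc)
  filter_upwards [eventually_ge_atTop 1] with n hn
  have := hbound n hn
  rw [prod_Icc_one_comp_pred (fun i => 1 - γ * b i)] at this
  linarith

theorem planner_probabilistically_complete_general (K : ℕ)
    (γ : ℕ → ℝ) (hγ : ∀ k, 1 ≤ k → k ≤ K → 0 < γ k ∧ γ k ≤ 1)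
    (a : ℕ → ℕ → ℝ)
    (hbound : ∀ k n, k ≤ K → 0 ≤ a k n ∧ a k n ≤ 1)
    (hzero : ∀ n, a 0 n = 1)
    (hrec : ∀ k, 1 ≤ k → k ≤ K → ∀ n, 1 ≤ n →
      1 - a k n ≤ ∏ i ∈ Finset.Icc 1 n, (1 - γ k * a (k - 1) (i - 1))) :
    ∀ k, 1 ≤ k → k ≤ K →
      Filter.Tendsto (fun n => a k n) Filter.atTop (nhds 1) := by
  suffices h : ∀ k ≤ K, Tendsto (a k) atTop (𝓝 1) from fun k _ hkK => h k hkK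
  intro k
  induction k with
  | zero => intro _; simp [funext hzero]
  | succ k ih =>
    intro hkK
    have hk : k ≤ K := k.le_succ.trans hkK
    obtain ⟨hγ0, hγ1⟩ := hγ (k + 1) k.succ_pos hkK
    exact tendsto_one_of_one_sub_le_prod hγ0 hγ1 (fun n => (hbound k n hk).1)
      (fun n => (hbound k n hk).2) (ih hk) (fun n => (hbound (k + 1) n hkK).2)
      (hrec (k + 1) k.succ_pos hkK)

/-- Abstract form of probabilistic completeness (Section 6.2): if `a k n` satisfies the
recursive product bound `1 − a(k,n) ≤ ∏_{i=1}^n (1 − γ_k · a(k−1, i−1))` with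
`a(0,n) = 1`, then `a(k,n) → 1` as `n → ∞` for every `1 ≤ k ≤ K`. -/
theorem planner_probabilistically_complete (K : ℕ) (hK : 1 ≤ K)
    (γ : ℕ → ℝ) (hγ : ∀ k, 1 ≤ k → k ≤ K → 0 < γ k ∧ γ k ≤ 1)
    (a : ℕ → ℕ → ℝ)
    (hbound : ∀ k n, k ≤ K → 0 ≤ a k n ∧ a k n ≤ 1)
    (hzero : ∀ n, a 0 n = 1)
    (hrec : ∀ k, 1 ≤ k → k ≤ K → ∀ n, 1 ≤ n →
      1 - a k n ≤ ∏ i ∈ Finset.Icc 1 n, (1 - γ k * a (k - 1) (i - 1))) :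
    ∀ k, 1 ≤ k → k ≤ K →
      Filter.Tendsto (fun n => a k n) Filter.atTop (nhds 1) :=
  planner_probabilistically_complete_general K γ hγ a hbound hzero hrec
end
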